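/- arXiv:2503.22467 — 2 statements merged into one kernel-verified Lean document; each statement's English description precedes it below -/
import Mathlib

section
/- (Identifiability of the diagonal Normal-Block model with observed clusters.) Let n, p, q, d ≥ 1, let c : Fin p → Fin q be a clustering in which every cluster contains at least two elements, and let C be the associated p×q clustering matrix. Let X be an n×d real matrix of rank d, let δ, δ' : Fin p → ℝ be positive vectors, let Σ, Σ' be symmetric positive semidefinite q×q real matrices, and let B, B' be d×p real matrices. If for every i ∈ Fin n and every y ∈ ℝ^p the Gaussian density with mean Bᵀ X_i and covariance diag(δ) + C Σ Cᵀ evaluated at y equals the Gaussian density with mean B'ᵀ X_i and covariance diag(δ') + C Σ' Cᵀ evaluated at y, then B = B', δ = δ' and Σ = Σ'. -/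
open Matrix

/-- The clustering matrix associated with a clustering `c` of `p` variables into
`q` clusters: `C j k = 1` if `c j = k` and `0` otherwise. -/
def clusterMatrix {p q : ℕ} (c : Fin p → Fin q) : Matrix (Fin p) (Fin q) ℝ :=
  Matrix.of fun j k => if c j = k then 1 else 0

/-- Gaussian density with mean `m` and covariance `S`. -/
noncomputable def gaussDensity {p : ℕ} (m : Fin p → ℝ) (S : Matrix (Fin p) (Fin p) ℝ)
    (y : Fin p → ℝ) : ℝ :=
  (Real.sqrt ((2 * Real.pi) ^ p * S.det))⁻¹ *
    Real.exp (-(1 / 2) * ((y - m) ⬝ᵥ (S⁻¹ *ᵥ (y - m))))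

lemma symm_dot_aux {p : ℕ} {A : Matrix (Fin p) (Fin p) ℝ} (hA : Aᵀ = A)
    (z w : Fin p → ℝ) : w ⬝ᵥ (A *ᵥ z) = z ⬝ᵥ (A *ᵥ w) := by
  rw [dotProduct_mulVec]
  nth_rewrite 1 [← hA]
  rw [vecMul_transpose, dotProduct_comm]

lemma quad_eq_aux {p : ℕ} {A A' : Matrix (Fin p) (Fin p) ℝ}
    (hA : Aᵀ = A) (hA' : A'ᵀ = A')
    (h : ∀ z, z ⬝ᵥ (A *ᵥ z) = z ⬝ᵥ (A' *ᵥ z)) : A = A' := by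
  have key : ∀ z w, z ⬝ᵥ (A *ᵥ w) = z ⬝ᵥ (A' *ᵥ w) := by
    intro z w
    have h1 := h (z + w); have h2 := h z; have h3 := h w
    simp only [mulVec_add, dotProduct_add, add_dotProduct] at h1
    have s1 := symm_dot_aux hA z w
    have s2 := symm_dot_aux hA' z w
    linarith
  ext j l
  have := key (Pi.single j 1) (Pi.single l 1)
  simpa [mulVec_single, single_dotProduct] using this

lemma gauss_eq_aux {p : ℕ} {m m' : Fin p → ℝ} {S S' : Matrix (Fin p) (Fin p) ℝ}
    (hS : S.PosDef) (hS' : S'.PosDef)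
    (h : ∀ y, gaussDensity m S y = gaussDensity m' S' y) : m = m' ∧ S = S' := by
  have hdet : (0:ℝ) < S.det := hS.det_pos
  have hdet' : (0:ℝ) < S'.det := hS'.det_pos
  have hsymm : S⁻¹ᵀ = S⁻¹ := by
    have := hS.isHermitian.inv
    rwa [IsHermitian, conjTranspose_eq_transpose_of_trivial] at this
  have hsymm' : S'⁻¹ᵀ = S'⁻¹ := by
    have := hS'.isHermitian.inv
    rwa [IsHermitian, conjTranspose_eq_transpose_of_trivial] at this
  have ha : (0:ℝ) < Real.sqrt ((2 * Real.pi) ^ p * S.det) :=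
    Real.sqrt_pos.mpr (by positivity)
  have ha' : (0:ℝ) < Real.sqrt ((2 * Real.pi) ^ p * S'.det) :=
    Real.sqrt_pos.mpr (by positivity)
  have key : ∀ y, (y - m) ⬝ᵥ (S⁻¹ *ᵥ (y - m))
      = (y - m') ⬝ᵥ (S'⁻¹ *ᵥ (y - m')) - (m - m') ⬝ᵥ (S'⁻¹ *ᵥ (m - m')) := by
    intro y
    have h1 := h y
    have h2 := h m
    unfold gaussDensity at h1 h2
    rw [sub_self] at h2
    simp only [zero_dotProduct, mulVec_zero, dotProduct_zero, mul_zero, Real.exp_zero,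
      mul_one] at h2
    rw [h2] at h1
    rw [mul_assoc, ← Real.exp_add] at h1
    have := mul_left_cancel₀ (inv_ne_zero ha'.ne') h1
    have := Real.exp_injective this
    linarith
  set w : Fin p → ℝ := m - m' with hw
  have key2 : ∀ z : Fin p → ℝ, z ⬝ᵥ (S⁻¹ *ᵥ z)
      = z ⬝ᵥ (S'⁻¹ *ᵥ z) + 2 * (z ⬝ᵥ (S'⁻¹ *ᵥ w)) := by
    intro z
    have := key (z + m)
    rw [add_sub_cancel_right] at this
    have hzw : z + m - m' = z + w := by rw [hw]; abel
    rw [hzw] at this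
    simp only [mulVec_add, dotProduct_add, add_dotProduct] at this
    have s := symm_dot_aux hsymm' z w
    linarith
  have hker : S'⁻¹ *ᵥ w = 0 := by
    funext j
    have h1 := key2 (Pi.single j 1)
    have h2 := key2 (-(Pi.single j 1))
    simp only [neg_dotProduct, dotProduct_neg, mulVec_neg, neg_neg] at h2
    have : Pi.single j 1 ⬝ᵥ (S'⁻¹ *ᵥ w) = 0 := by linarith
    simpa [single_dotProduct] using this
  have hm : m = m' := by
    have := congrArg (fun v => S' *ᵥ v) hker
    simp only [mulVec_mulVec, mulVec_zero] at this
    rw [Matrix.mul_nonsing_inv _ (isUnit_iff_ne_zero.mpr hdet'.ne'), one_mulVec] at this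
    rw [hw] at this
    exact sub_eq_zero.mp this
  refine ⟨hm, ?_⟩
  have hq : ∀ z, z ⬝ᵥ (S⁻¹ *ᵥ z) = z ⬝ᵥ (S'⁻¹ *ᵥ z) := by
    intro z
    have := key2 z
    rw [hker, dotProduct_zero, mul_zero, add_zero] at this
    exact this
  have hinv : S⁻¹ = S'⁻¹ := quad_eq_aux hsymm hsymm' hq
  calc S = S⁻¹⁻¹ := (Matrix.nonsing_inv_nonsing_inv _ (isUnit_iff_ne_zero.mpr hdet.ne')).symm
    _ = S'⁻¹⁻¹ := by rw [hinv]
    _ = S' := Matrix.nonsing_inv_nonsing_inv _ (isUnit_iff_ne_zero.mpr hdet'.ne')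

lemma cluster_apply_aux {p q : ℕ} (c : Fin p → Fin q) (M : Matrix (Fin q) (Fin q) ℝ)
    (j l : Fin p) : (clusterMatrix c * M * (clusterMatrix c)ᵀ) j l = M (c j) (c l) := by
  simp [clusterMatrix, Matrix.mul_apply, Matrix.transpose_apply, ite_mul, mul_ite]

/-- Identifiability of the diagonal Normal-Block model with observed clusters. -/
theorem stmt4 {n p q d : ℕ} (hn : 1 ≤ n) (hp : 1 ≤ p) (hq : 1 ≤ q) (hd : 1 ≤ d)
    (c : Fin p → Fin q)
    (htwo : ∀ k : Fin q, ∃ j l : Fin p, j ≠ l ∧ c j = k ∧ c l = k)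
    (X : Matrix (Fin n) (Fin d) ℝ) (hX : X.rank = d)
    (δ δ' : Fin p → ℝ) (hδ : ∀ j, 0 < δ j) (hδ' : ∀ j, 0 < δ' j)
    (Sg Sg' : Matrix (Fin q) (Fin q) ℝ) (hSg : Sg.PosSemidef) (hSg' : Sg'.PosSemidef)
    (B B' : Matrix (Fin d) (Fin p) ℝ)
    (h : ∀ (i : Fin n) (y : Fin p → ℝ),
      gaussDensity (Bᵀ *ᵥ (fun k => X i k))
        (Matrix.diagonal δ + clusterMatrix c * Sg * (clusterMatrix c)ᵀ) y
      = gaussDensity (B'ᵀ *ᵥ (fun k => X i k))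
        (Matrix.diagonal δ' + clusterMatrix c * Sg' * (clusterMatrix c)ᵀ) y) :
    B = B' ∧ δ = δ' ∧ Sg = Sg' := by
  -- positive definiteness of the covariance matrices
  have hC : (clusterMatrix c * Sg * (clusterMatrix c)ᵀ).PosSemidef := by
    have := hSg.mul_mul_conjTranspose_same (clusterMatrix c)
    rwa [conjTranspose_eq_transpose_of_trivial] at this
  have hC' : (clusterMatrix c * Sg' * (clusterMatrix c)ᵀ).PosSemidef := by
    have := hSg'.mul_mul_conjTranspose_same (clusterMatrix c)
    rwa [conjTranspose_eq_transpose_of_trivial] at this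
  have hPD : (Matrix.diagonal δ + clusterMatrix c * Sg * (clusterMatrix c)ᵀ).PosDef :=
    (Matrix.PosDef.diagonal hδ).add_posSemidef hC
  have hPD' : (Matrix.diagonal δ' + clusterMatrix c * Sg' * (clusterMatrix c)ᵀ).PosDef :=
    (Matrix.PosDef.diagonal hδ').add_posSemidef hC'
  -- apply Gaussian identifiability at each row
  have hG : ∀ i : Fin n, (Bᵀ *ᵥ (fun k => X i k)) = (B'ᵀ *ᵥ (fun k => X i k))
      ∧ (Matrix.diagonal δ + clusterMatrix c * Sg * (clusterMatrix c)ᵀ)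
        = (Matrix.diagonal δ' + clusterMatrix c * Sg' * (clusterMatrix c)ᵀ) :=
    fun i => gauss_eq_aux hPD hPD' (h i)
  -- covariance equality
  have i0 : Fin n := ⟨0, hn⟩
  have hScov := (hG i0).2
  have hoff : ∀ j l : Fin p, j ≠ l → Sg (c j) (c l) = Sg' (c j) (c l) := by
    intro j l hjl
    have := congrArg (fun M => M j l) hScov
    simpa [Matrix.add_apply, Matrix.diagonal_apply_ne _ hjl, cluster_apply_aux] using this
  have hSgeq : Sg = Sg' := by
    ext k k'
    by_cases hkk : k = k'
    · subst hkk
      obtain ⟨j, l, hjl, hcj, hcl⟩ := htwo k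
      have := hoff j l hjl
      rwa [hcj, hcl] at this
    · obtain ⟨j, _, _, hcj, _⟩ := htwo k
      obtain ⟨l, _, _, hcl, _⟩ := htwo k'
      have hjl : j ≠ l := by
        intro hEq; apply hkk; rw [← hcj, ← hcl, hEq]
      have := hoff j l hjl
      rwa [hcj, hcl] at this
  have hδeq : δ = δ' := by
    funext j
    have := congrArg (fun M => M j j) hScov
    simp only [Matrix.add_apply, Matrix.diagonal_apply_eq, cluster_apply_aux] at this
    rw [hSgeq] at this
    linarith
  -- mean equality gives B = B'
  have hXB : X * B = X * B' := by
    ext i j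
    have := congrFun (hG i).1 j
    simpa [Matrix.mul_apply, Matrix.mulVec, dotProduct, Matrix.transpose_apply,
      mul_comm] using this
  have hker : LinearMap.ker X.mulVecLin = ⊥ := by
    have h1 := LinearMap.finrank_range_add_finrank_ker X.mulVecLin
    rw [Module.finrank_fin_fun] at h1
    have h2 : Module.finrank ℝ (LinearMap.range X.mulVecLin) = d := hX
    rw [h2] at h1
    have h3 : Module.finrank ℝ (LinearMap.ker X.mulVecLin) = 0 := by omega
    exact Submodule.finrank_eq_zero.mp h3
  have hu : IsUnit (Xᵀ * X) := by
    rw [← Matrix.mulVec_injective_iff_isUnit]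
    have hk : LinearMap.ker (Xᵀ * X).mulVecLin = ⊥ := by
      rw [Matrix.ker_mulVecLin_transpose_mul_self]; exact hker
    exact LinearMap.ker_eq_bot.mp hk
  have hud : IsUnit (Xᵀ * X).det := (Matrix.isUnit_iff_isUnit_det _).mp hu
  have h5 : Xᵀ * X * B = Xᵀ * X * B' := by
    rw [Matrix.mul_assoc, Matrix.mul_assoc, hXB]
  have hB : B = B' := by
    calc B = (Xᵀ * X)⁻¹ * (Xᵀ * X * B) := by
          rw [← Matrix.mul_assoc, Matrix.nonsing_inv_mul _ hud, Matrix.one_mul]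
      _ = (Xᵀ * X)⁻¹ * (Xᵀ * X * B') := by rw [h5]
      _ = B' := by rw [← Matrix.mul_assoc, Matrix.nonsing_inv_mul _ hud, Matrix.one_mul]
  exact ⟨hB, hδeq, hSgeq⟩
end

section
/- (Non-identifiability with a singleton cluster.) Let c : Fin p → Fin q be a clustering, and suppose some cluster k* contains exactly one element, i.e. there is a unique j with c j = k*. Let C be the associated clustering matrix, let d : Fin p → ℝ be a positive vector and let Σ be a symmetric positive definite q×q real matrix. Then there exist a positive vector d' : Fin p → ℝ and a symmetric positive definite q×q real matrix Σ' with (d', Σ') ≠ (d, Σ) such that diag(d') + C Σ' Cᵀ = diag(d) + C Σ Cᵀ. -/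
open Matrix

/-! Moving mass `ε` from the noise variance `d j` of the only member `j` of a cluster `k` to the
cluster variance `Σ k k` leaves `diag(d) + C Σ Cᵀ` unchanged, because the entry `Σ k k` enters
`C Σ Cᵀ` only at position `(j, j)`; any `0 < ε < d j` keeps both parts positive. -/

lemma clusterMatrix_mul_mul_transpose_apply {p q : ℕ} (c : Fin p → Fin q)
    (M : Matrix (Fin q) (Fin q) ℝ) (i j : Fin p) :
    (clusterMatrix c * M * (clusterMatrix c)ᵀ) i j = M (c i) (c j) := by
  simp [clusterMatrix, mul_apply, ite_mul, mul_ite]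

lemma clusterMatrix_mul_diagonal_single_mul_transpose {p q : ℕ} {c : Fin p → Fin q}
    {k : Fin q} {j : Fin p} (hj : ∀ i, c i = k ↔ i = j) (ε : ℝ) :
    clusterMatrix c * diagonal (Pi.single k ε) * (clusterMatrix c)ᵀ
      = diagonal (Pi.single j ε) := by
  ext i i'
  rw [clusterMatrix_mul_mul_transpose_apply]
  by_cases hi : i = j
  · subst hi
    have hci : c i = k := (hj i).2 rfl
    simp [diagonal_apply, hci, @eq_comm _ k, hj, @eq_comm _ i']
  · simp [diagonal_apply, hj, hi]

lemma Matrix.PosDef.add_diagonal_single {n : Type*} [Fintype n] [DecidableEq n]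
    {S : Matrix n n ℝ} (hS : S.PosDef) (k : n) {ε : ℝ} (hε : 0 ≤ ε) : (S + diagonal (Pi.single k ε)).PosDef :=
  hS.add_posSemidef <| posSemidef_diagonal_iff.2 fun i => by
    rw [Pi.single_apply]; split_ifs <;> simp [hε]

/-- Non-identifiability with a singleton cluster: if some cluster contains exactly
one element, the decomposition `diag(d) + C Σ Cᵀ` is not unique. -/
theorem stmt5 {p q : ℕ} (c : Fin p → Fin q) (kstar : Fin q)
    (hsingleton : ∃! j : Fin p, c j = kstar)
    (d : Fin p → ℝ) (hd : ∀ j, 0 < d j)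
    (Sg : Matrix (Fin q) (Fin q) ℝ) (hSg : Sg.PosDef) :
    ∃ (d' : Fin p → ℝ) (Sg' : Matrix (Fin q) (Fin q) ℝ),
      (∀ j, 0 < d' j) ∧ Sg'.PosDef ∧ (d', Sg') ≠ (d, Sg) ∧
      Matrix.diagonal d' + clusterMatrix c * Sg' * (clusterMatrix c)ᵀ
        = Matrix.diagonal d + clusterMatrix c * Sg * (clusterMatrix c)ᵀ := by
  obtain ⟨j, hj, huniq⟩ := hsingleton
  have hcj : ∀ i, c i = kstar ↔ i = j := fun i => ⟨huniq i, fun h => h ▸ hj⟩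
  set ε := d j / 2
  have hε : 0 < ε := half_pos (hd j)
  refine ⟨d - Pi.single j ε, Sg + diagonal (Pi.single kstar ε), fun i => ?_,
    hSg.add_diagonal_single kstar hε.le, fun h => ?_, ?_⟩
  · rcases eq_or_ne i j with rfl | hi
    · simp [ε, hd i]
    · simp [hi, hd i]
  · have := congrFun (congrArg Prod.fst h) j
    simp [hε.ne'] at this
  · rw [Matrix.mul_add, Matrix.add_mul, clusterMatrix_mul_diagonal_single_mul_transpose hcj,
      add_comm _ (diagonal (Pi.single j ε)), ← add_assoc, diagonal_add]
    simp
end
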